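/- Let E be a Polish space with a regular σ-finite Borel measure α and let m ∈ (0,∞]. For any subset S ⊆ E, the set 𝒫_m(S) is convex; and for any compact subset K ⊆ E, the set 𝒫_m(K) is compact in the weak-* topology. -/

import Mathlib

open MeasureTheory
open scoped ENNReal

noncomputable def Mmax {E : Type*} [MeasurableSpace E] (α μ : Measure E) : ℝ≥0∞ :=
  ⨆ (A : Set E) (_ : MeasurableSet A) (_ : 0 < α A), μ A / α A

/-- `𝒫_m(S)`: probability measures supported in `S` with maximal function at most `m`. -/
def Pm {E : Type*} [MeasurableSpace E] [TopologicalSpace E]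
    (α : Measure E) (m : ℝ≥0∞) (S : Set E) : Set (ProbabilityMeasure E) :=
  {μ | Mmax α μ.toMeasure ≤ m ∧ μ.toMeasure Sᶜ = 0}

/-!
Convexity: `μ ↦ M(μ)` is a supremum of linear functionals of `μ`, hence convex.

Compactness: by Prokhorov, the probability measures carried by the compact set `K` form a
compact set, so it suffices that `{μ | M(μ) ≤ m}` is closed. By outer regularity of `α` the
supremum defining `M(μ)` may be taken over open sets only, and for an open `U` the map
`μ ↦ μ(U)` is lower semicontinuous (portmanteau), so `M` is lower semicontinuous.
-/

open Set

section Mmax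

variable {E : Type*} [MeasurableSpace E]

lemma measure_div_le_Mmax {α : Measure E} (μ : Measure E) {A : Set E} (hA : MeasurableSet A)
    (hαA : 0 < α A) : μ A / α A ≤ Mmax α μ :=
  le_iSup₂_of_le A hA <| le_iSup_of_le hαA le_rfl

lemma Mmax_smul (α μ : Measure E) (c : ℝ≥0∞) : Mmax α (c • μ) = c * Mmax α μ := by
  simp only [Mmax, Measure.smul_apply, smul_eq_mul, ENNReal.mul_iSup, mul_div_assoc]

lemma Mmax_add_le (α μ ν : Measure E) : Mmax α (μ + ν) ≤ Mmax α μ + Mmax α ν := by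
  refine iSup₂_le fun A hA => iSup_le fun hαA => ?_
  rw [Measure.add_apply, ENNReal.add_div]
  exact add_le_add (measure_div_le_Mmax μ hA hαA) (measure_div_le_Mmax ν hA hαA)

lemma Mmax_convexComb_le {α μ ν : Measure E} {m t : ℝ≥0∞} (ht : t ≤ 1) (hμ : Mmax α μ ≤ m)
    (hν : Mmax α ν ≤ m) : Mmax α (t • μ + (1 - t) • ν) ≤ m :=
  calc Mmax α (t • μ + (1 - t) • ν) ≤ t * Mmax α μ + (1 - t) * Mmax α ν := by
        rw [← Mmax_smul, ← Mmax_smul]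
        exact Mmax_add_le _ _ _
    _ ≤ t * m + (1 - t) * m := by gcongr
    _ = m := by rw [← add_mul, add_tsub_cancel_of_le ht, one_mul]

lemma Mmax_eq_iSup_isOpen [TopologicalSpace E] [OpensMeasurableSpace E] (α : Measure E)
    [α.OuterRegular] (μ : Measure E) :
    Mmax α μ = ⨆ (U : Set E) (_ : IsOpen U) (_ : 0 < α U), μ U / α U := by
  refine le_antisymm (iSup₂_le fun A hA => iSup_le fun hαA => ?_)
    (iSup₂_le fun U hU => iSup_le fun hαU => measure_div_le_Mmax μ hU.measurableSet hαU)
  -- `α A` is the infimum of `α U` over open `U ⊇ A`, so `μ A / α A = ⨆ μ A / α U ≤ ⨆ μ U / α U`.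
  rw [ENNReal.div_eq_inv_mul, A.measure_eq_iInf_isOpen]
  simp only [ENNReal.inv_iInf, ENNReal.iSup_mul]
  refine iSup₂_le fun U hAU => iSup_le fun hU => ?_
  have hαU : 0 < α U := hαA.trans_le (measure_mono hAU)
  rw [← ENNReal.div_eq_inv_mul]
  exact le_iSup₂_of_le U hU <| le_iSup_of_le hαU <| by gcongr

end Mmax

section ProbabilityMeasure

variable {E : Type*} [MeasurableSpace E] [TopologicalSpace E]

lemma ProbabilityMeasure.lowerSemicontinuous_measure_of_isOpen [OpensMeasurableSpace E]
    [HasOuterApproxClosed E] {U : Set E} (hU : IsOpen U) :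
    LowerSemicontinuous fun μ : ProbabilityMeasure E => (μ : Measure E) U :=
  lowerSemicontinuous_iff_le_liminf.2 fun _ =>
    ProbabilityMeasure.le_liminf_measure_open_of_tendsto Filter.tendsto_id hU

lemma isClosed_setOf_Mmax_le [OpensMeasurableSpace E] [HasOuterApproxClosed E] (α : Measure E)
    [α.OuterRegular] (m : ℝ≥0∞) :
    IsClosed {μ : ProbabilityMeasure E | Mmax α μ ≤ m} := by
  simp only [Mmax_eq_iSup_isOpen, iSup_le_iff, ofPred_forall]
  refine isClosed_iInter fun U => isClosed_iInter fun hU => isClosed_iInter fun hαU => ?_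
  exact ((ENNReal.continuous_div_const _ hαU.ne').comp_lowerSemicontinuous
    (ProbabilityMeasure.lowerSemicontinuous_measure_of_isOpen hU)
    fun _ _ h => ENNReal.div_le_div_right h _).isClosed_preimage m

lemma isCompact_setOf_measure_compl_eq_zero [T2Space E] [BorelSpace E] {K : Set E}
    (hK : IsCompact K) : IsCompact {μ : ProbabilityMeasure E | (μ : Measure E) Kᶜ = 0} := by
  convert isCompact_setOfPred_probabilityMeasure_mass_eq_compl_isCompact_le (u := 0)
    (K := fun _ => K) tendsto_const_nhds (fun _ => hK) (Or.inr monotone_const) using 2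
  simp

end ProbabilityMeasure

theorem stmt8_general {E : Type*} [MeasurableSpace E] [TopologicalSpace E] [PolishSpace E]
    [BorelSpace E] (α : Measure E) [α.OuterRegular]
    (m : ℝ≥0∞) (S : Set E) (K : Set E) (hK : IsCompact K) :
    (∀ μ ∈ Pm α m S, ∀ ν ∈ Pm α m S, ∀ t : ℝ≥0∞, t ≤ 1 →
      ∀ σ : ProbabilityMeasure E,
        σ.toMeasure = t • μ.toMeasure + (1 - t) • ν.toMeasure → σ ∈ Pm α m S) ∧
    IsCompact (Pm α m K) := by
  refine ⟨fun μ hμ ν hν t ht σ hσ => ⟨?_, ?_⟩, ?_⟩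
  · rw [hσ]
    exact Mmax_convexComb_le ht hμ.1 hν.1
  · simp [hσ, hμ.2, hν.2]
  · exact (isCompact_setOf_measure_compl_eq_zero hK).inter_left (isClosed_setOf_Mmax_le α m)

/-- `𝒫_m(S)` is convex for every `S ⊆ E`, and `𝒫_m(K)` is weak-* compact for
every compact `K ⊆ E`. -/
theorem stmt8 {E : Type*} [MeasurableSpace E] [TopologicalSpace E] [PolishSpace E]
    [BorelSpace E] (α : Measure E) [SigmaFinite α] [α.InnerRegular] [α.OuterRegular]
    (m : ℝ≥0∞) (hm : 0 < m) (S : Set E) (K : Set E) (hK : IsCompact K) :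
    (∀ μ ∈ Pm α m S, ∀ ν ∈ Pm α m S, ∀ t : ℝ≥0∞, t ≤ 1 →
      ∀ σ : ProbabilityMeasure E,
        σ.toMeasure = t • μ.toMeasure + (1 - t) • ν.toMeasure → σ ∈ Pm α m S) ∧
    IsCompact (Pm α m K) :=
  stmt8_general α m S K hK
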